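/- Let μ_1,…,μ_K ∈ ℝ, σ > 0, and λ_1,…,λ_K ≥ 0 with Σ_k λ_k = 1. Then the Gaussian distribution 𝒩(Σ_k λ_kμ_k, σ²) is a 2-Wasserstein barycenter of the Gaussian distributions 𝒩(μ_1,σ²),…,𝒩(μ_K,σ²) with weights λ_1,…,λ_K; that is, it minimizes Σ_k λ_k W_2(P, 𝒩(μ_k,σ²))² over all Borel probability measures P on ℝ with finite second moment. -/

import Mathlib

open MeasureTheory ProbabilityTheory ENNReal

noncomputable section

/-- `π` is a coupling of the probability measures `P` and `Q`. -/
def IsCoupling {X : Type*} [MeasurableSpace X]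
    (π : Measure (X × X)) (P Q : Measure X) : Prop :=
  IsProbabilityMeasure π ∧ π.map Prod.fst = P ∧ π.map Prod.snd = Q

/-- Squared 2-Wasserstein distance `W₂(P,Q)²` between probability measures on `ℝ`. -/
def W2sq (P Q : Measure ℝ) : ℝ≥0∞ :=
  ⨅ π ∈ {π : Measure (ℝ × ℝ) | IsCoupling π P Q},
    ∫⁻ q, ENNReal.ofReal ((q.1 - q.2) ^ 2) ∂π


/-! Translating `𝒩(μ̄, σ²)` by `μₖ - μ̄` gives `𝒩(μₖ, σ²)`, so
`W₂(𝒩(μ̄, σ²), 𝒩(μₖ, σ²))² ≤ (μ̄ - μₖ)²`. Conversely, under any coupling of `P` and `Q` the cost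
`𝔼[(ξ - ξ')²]` is at least `(𝔼 ξ - 𝔼 ξ')²` by Jensen, so `W₂(P, 𝒩(μₖ, σ²))² ≥ (m - μₖ)²` where `m`
is the mean of `P`. Finally `∑ₖ λₖ (m - μₖ)²` is minimised at `m = μ̄ := ∑ₖ λₖ μₖ`. -/

section Moments

variable {Ω : Type*} [MeasurableSpace Ω] {μ : Measure Ω}

lemma memLp_two_of_lintegral_sq_lt_top {f : Ω → ℝ} (hf : AEStronglyMeasurable f μ)
    (h : ∫⁻ x, ENNReal.ofReal (f x ^ 2) ∂μ < ⊤) : MemLp f 2 μ :=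
  (memLp_two_iff_integrable_sq hf).2
    ⟨hf.pow 2, (hasFiniteIntegral_iff_ofReal (ae_of_all _ fun _ => sq_nonneg _)).2 h⟩

lemma ofReal_sq_integral_le_lintegral [IsProbabilityMeasure μ] {f : Ω → ℝ}
    (hf : AEStronglyMeasurable f μ) :
    ENNReal.ofReal ((∫ x, f x ∂μ) ^ 2) ≤ ∫⁻ x, ENNReal.ofReal (f x ^ 2) ∂μ := by
  rcases eq_top_or_lt_top (∫⁻ x, ENNReal.ofReal (f x ^ 2) ∂μ) with htop | hfin
  · exact htop ▸ le_top
  have hf2 := memLp_two_of_lintegral_sq_lt_top hf hfin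
  have hvar : (∫ x, f x ∂μ) ^ 2 ≤ ∫ x, f x ^ 2 ∂μ := by
    have := variance_nonneg f μ
    rw [variance_eq_sub hf2] at this
    simpa [sub_nonneg] using this
  calc ENNReal.ofReal ((∫ x, f x ∂μ) ^ 2) ≤ ENNReal.ofReal (∫ x, f x ^ 2 ∂μ) :=
        ENNReal.ofReal_le_ofReal hvar
    _ = ∫⁻ x, ENNReal.ofReal (f x ^ 2) ∂μ :=
        ofReal_integral_eq_lintegral_ofReal ((memLp_two_iff_integrable_sq hf).1 hf2)
          (ae_of_all _ fun _ => sq_nonneg _)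

end Moments

section Coupling

variable {X : Type*} [MeasurableSpace X] {π : Measure (X × X)} {P Q : Measure X}

lemma isCoupling_map_prodMk (P : Measure X) [IsProbabilityMeasure P] {g : X → X}
    (hg : Measurable g) : IsCoupling (P.map fun x => (x, g x)) P (P.map g) := by
  have hm : Measurable fun x => (x, g x) := measurable_id.prodMk hg
  refine ⟨Measure.isProbabilityMeasure_map hm.aemeasurable, ?_, ?_⟩
  · rw [Measure.map_map measurable_fst hm]
    exact Measure.map_id
  · rw [Measure.map_map measurable_snd hm]
    rfl

lemma IsCoupling.integrable_comp_fst (hπ : IsCoupling π P Q) {f : X → ℝ} (hf : Integrable f P) :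
    Integrable (fun q => f q.1) π := by
  rw [← hπ.2.1] at hf
  exact hf.comp_measurable measurable_fst

lemma IsCoupling.integrable_comp_snd (hπ : IsCoupling π P Q) {f : X → ℝ} (hf : Integrable f Q) :
    Integrable (fun q => f q.2) π := by
  rw [← hπ.2.2] at hf
  exact hf.comp_measurable measurable_snd

lemma IsCoupling.integral_comp_fst (hπ : IsCoupling π P Q) {f : X → ℝ}
    (hf : AEStronglyMeasurable f P) : ∫ q, f q.1 ∂π = ∫ x, f x ∂P := by
  rw [← hπ.2.1] at hf ⊢
  exact (integral_map measurable_fst.aemeasurable hf).symm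

lemma IsCoupling.integral_comp_snd (hπ : IsCoupling π P Q) {f : X → ℝ}
    (hf : AEStronglyMeasurable f Q) : ∫ q, f q.2 ∂π = ∫ x, f x ∂Q := by
  rw [← hπ.2.2] at hf ⊢
  exact (integral_map measurable_snd.aemeasurable hf).symm

end Coupling

lemma W2sq_map_le (P : Measure ℝ) [IsProbabilityMeasure P] {g : ℝ → ℝ} (hg : Measurable g) :
    W2sq P (P.map g) ≤ ∫⁻ x, ENNReal.ofReal ((x - g x) ^ 2) ∂P := by
  refine (iInf₂_le (P.map fun x => (x, g x)) (isCoupling_map_prodMk P hg)).trans_eq ?_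
  exact lintegral_map (by fun_prop) (measurable_id.prodMk hg)

lemma W2sq_map_add_const_le (P : Measure ℝ) [IsProbabilityMeasure P] (c : ℝ) :
    W2sq P (P.map (· + c)) ≤ ENNReal.ofReal (c ^ 2) := by
  refine (W2sq_map_le P (measurable_add_const c)).trans_eq ?_
  simp

lemma ofReal_sq_sub_integral_le_W2sq {P Q : Measure ℝ} (hP : Integrable id P)
    (hQ : Integrable id Q) : ENNReal.ofReal ((∫ x, x ∂P - ∫ x, x ∂Q) ^ 2) ≤ W2sq P Q := by
  refine le_iInf₂ fun π hπ => ?_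
  have : IsProbabilityMeasure π := hπ.1
  have hmean : ∫ q, (id q.1 - id q.2) ∂π = ∫ x, id x ∂P - ∫ x, id x ∂Q := by
    rw [integral_sub (hπ.integrable_comp_fst hP) (hπ.integrable_comp_snd hQ),
      hπ.integral_comp_fst aestronglyMeasurable_id, hπ.integral_comp_snd aestronglyMeasurable_id]
  have hJensen := ofReal_sq_integral_le_lintegral (μ := π) (f := fun q => id q.1 - id q.2)
    (by fun_prop)
  rwa [hmean] at hJensen

lemma Finset.sum_mul_sq_sub_weightedMean_le {ι : Type*} (s : Finset ι) {w : ι → ℝ}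
    (hw : ∑ i ∈ s, w i = 1) (a : ι → ℝ) (m : ℝ) :
    ∑ i ∈ s, w i * (∑ j ∈ s, w j * a j - a i) ^ 2 ≤ ∑ i ∈ s, w i * (m - a i) ^ 2 := by
  set ā := ∑ j ∈ s, w j * a j
  have hbias : ∑ i ∈ s, w i * (m - a i) ^ 2
      = ∑ i ∈ s, w i * (ā - a i) ^ 2 + (m - ā) ^ 2 := by
    have hcentred : ∑ i ∈ s, w i * (ā - a i) = 0 := by
      simp only [mul_sub, Finset.sum_sub_distrib, ← Finset.sum_mul, hw, one_mul, ā, sub_self]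
    calc ∑ i ∈ s, w i * (m - a i) ^ 2
        = ∑ i ∈ s, (w i * (ā - a i) ^ 2 + 2 * (m - ā) * (w i * (ā - a i)) + (m - ā) ^ 2 * w i) :=
          Finset.sum_congr rfl fun i _ => by ring
      _ = ∑ i ∈ s, w i * (ā - a i) ^ 2 + (m - ā) ^ 2 := by
          rw [Finset.sum_add_distrib, Finset.sum_add_distrib, ← Finset.mul_sum, hcentred,
            ← Finset.mul_sum, hw]
          ring
  rw [hbias]
  exact le_add_of_nonneg_right (sq_nonneg _)

lemma ENNReal.sum_ofReal_mul_ofReal {ι : Type*} (s : Finset ι) {w a : ι → ℝ}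
    (hw : ∀ i, 0 ≤ w i) (ha : ∀ i, 0 ≤ a i) :
    ∑ i ∈ s, ENNReal.ofReal (w i) * ENNReal.ofReal (a i) = ENNReal.ofReal (∑ i ∈ s, w i * a i) := by
  rw [ENNReal.ofReal_sum_of_nonneg fun i _ => mul_nonneg (hw i) (ha i)]
  exact Finset.sum_congr rfl fun i _ => (ENNReal.ofReal_mul (hw i)).symm

theorem gaussian_barycenter_general
    {K : ℕ} (μ : Fin K → ℝ) (σ : ℝ)
    (lam : Fin K → ℝ) (hlam : ∀ k, 0 ≤ lam k) (hsum : ∑ k, lam k = 1) :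
    ∀ P : Measure ℝ, IsProbabilityMeasure P →
      (∫⁻ x, ENNReal.ofReal (x ^ 2) ∂P < ⊤) →
      ∑ k, ENNReal.ofReal (lam k) *
          W2sq (gaussianReal (∑ k', lam k' * μ k') (Real.toNNReal (σ ^ 2)))
            (gaussianReal (μ k) (Real.toNNReal (σ ^ 2)))
        ≤ ∑ k, ENNReal.ofReal (lam k) *
            W2sq P (gaussianReal (μ k) (Real.toNNReal (σ ^ 2))) := by
  intro P _ hP
  set v := Real.toNNReal (σ ^ 2)
  set μbar := ∑ k', lam k' * μ k'
  have hupper : ∀ k, W2sq (gaussianReal μbar v) (gaussianReal (μ k) v)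
      ≤ ENNReal.ofReal ((μbar - μ k) ^ 2) := by
    intro k
    have := W2sq_map_add_const_le (gaussianReal μbar v) (μ k - μbar)
    rwa [gaussianReal_map_add_const, add_sub_cancel, ← neg_sub, neg_sq] at this
  have hPint : Integrable id P :=
    (memLp_two_of_lintegral_sq_lt_top aestronglyMeasurable_id hP).integrable one_le_two
  have hlower : ∀ k, ENNReal.ofReal ((∫ x, x ∂P - μ k) ^ 2) ≤ W2sq P (gaussianReal (μ k) v) := by
    intro k
    simpa [integral_id_gaussianReal] using ofReal_sq_sub_integral_le_W2sq hPint
      ((memLp_id_gaussianReal 2).integrable one_le_two)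
  calc ∑ k, ENNReal.ofReal (lam k) * W2sq (gaussianReal μbar v) (gaussianReal (μ k) v)
      ≤ ∑ k, ENNReal.ofReal (lam k) * ENNReal.ofReal ((μbar - μ k) ^ 2) := by
        gcongr with k
        exact hupper k
    _ = ENNReal.ofReal (∑ k, lam k * (μbar - μ k) ^ 2) :=
        ENNReal.sum_ofReal_mul_ofReal _ hlam fun _ => sq_nonneg _
    _ ≤ ENNReal.ofReal (∑ k, lam k * (∫ x, x ∂P - μ k) ^ 2) :=
        ENNReal.ofReal_le_ofReal (Finset.sum_mul_sq_sub_weightedMean_le _ hsum μ _)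
    _ = ∑ k, ENNReal.ofReal (lam k) * ENNReal.ofReal ((∫ x, x ∂P - μ k) ^ 2) :=
        (ENNReal.sum_ofReal_mul_ofReal _ hlam fun _ => sq_nonneg _).symm
    _ ≤ ∑ k, ENNReal.ofReal (lam k) * W2sq P (gaussianReal (μ k) v) := by
        gcongr with k
        exact hlower k

/-- **the Gaussian with averaged mean is a 2-Wasserstein barycenter of
Gaussians with common variance.** -/
theorem gaussian_barycenter
    {K : ℕ} (μ : Fin K → ℝ) (σ : ℝ) (hσ : 0 < σ)
    (lam : Fin K → ℝ) (hlam : ∀ k, 0 ≤ lam k) (hsum : ∑ k, lam k = 1) :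
    ∀ P : Measure ℝ, IsProbabilityMeasure P →
      (∫⁻ x, ENNReal.ofReal (x ^ 2) ∂P < ⊤) →
      ∑ k, ENNReal.ofReal (lam k) *
          W2sq (gaussianReal (∑ k', lam k' * μ k') (Real.toNNReal (σ ^ 2)))
            (gaussianReal (μ k) (Real.toNNReal (σ ^ 2)))
        ≤ ∑ k, ENNReal.ofReal (lam k) *
            W2sq P (gaussianReal (μ k) (Real.toNNReal (σ ^ 2))) :=
  gaussian_barycenter_general μ σ lam hlam hsum

end
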